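/- There is an absolute constant D > 0 such that for every H ∈ (0,1), every t ∈ (0,1] and every integer j ≥ 0, the function φ_t(s) = (t + s)^{H − 1/2} on [0,1] satisfies ∑_{k=0}^{2^j − 1} ⟨φ_t, ℋ_{2^j + k}⟩² ≤ D · 2^{−2jH} · ∑_{ℓ=1}^∞ ℓ^{2H − 3}. -/

import Mathlib

open MeasureTheory ProbabilityTheory Real Filter

noncomputable section

/-- The mother Haar wavelet: 1 on [0,1/2), -1 on [1/2,1], 0 otherwise. -/
def haarMother (s : ℝ) : ℝ :=
  if s ∈ Set.Ico (0 : ℝ) (1/2) then 1 else if s ∈ Set.Icc (1/2 : ℝ) 1 then -1 else 0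

/-- The Haar orthonormal basis of L²[0,1]: `haarFun 0 = 1` on `[0,1]`, and for
`n = 2^j + k` with `0 ≤ k < 2^j`, `haarFun n s = 2^(j/2) * haarMother (2^j * s - k)`. -/
def haarFun (n : ℕ) (s : ℝ) : ℝ :=
  if n = 0 then (if s ∈ Set.Icc (0 : ℝ) 1 then 1 else 0)
  else (2 : ℝ) ^ ((Nat.log2 n : ℝ) / 2) *
    haarMother ((2 : ℝ) ^ (Nat.log2 n : ℕ) * s - ((n - 2 ^ Nat.log2 n : ℕ) : ℝ))

/-- Inner product on L²[0,1]. -/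
def innerUnit (f g : ℝ → ℝ) : ℝ := ∫ s in (0 : ℝ)..1, f s * g s

/-- Inner product on L²[-1,0]. -/
def innerNeg (f g : ℝ → ℝ) : ℝ := ∫ s in (-1 : ℝ)..0, f s * g s

/-- The Haar orthonormal basis of L²[-1,0]. -/
def haarFunNeg (n : ℕ) (s : ℝ) : ℝ := haarFun n (s + 1)

/-- `f_t^{(1)}(s) = (t-s)^(H-1/2)` for `s ∈ [0,t)`, `0` otherwise. -/
def f1 (H t : ℝ) (s : ℝ) : ℝ := if 0 ≤ s ∧ s < t then (t - s) ^ (H - 1/2) else 0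

/-- `f_t^{(2)}(s) = (t-s)^(H-1/2) - (-s)^(H-1/2)` for `s ∈ [-1,0)`, `0` otherwise. -/
def f2 (H t : ℝ) (s : ℝ) : ℝ :=
  if -1 ≤ s ∧ s < 0 then (t - s) ^ (H - 1/2) - (-s) ^ (H - 1/2) else 0

/-- Haar coefficient `⟨f_t^{(1)}, ℋ_n⟩`. -/
def coeff1 (H t : ℝ) (n : ℕ) : ℝ := innerUnit (f1 H t) (haarFun n)

/-- Haar coefficient `⟨f_t^{(2)}, ℋ̃_n⟩`. -/
def coeff2 (H t : ℝ) (n : ℕ) : ℝ := innerNeg (f2 H t) (haarFunNeg n)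

/-- `g_n(t,H) = ∫₀¹ ((t + 1/x)^(H-3/2) - (1/x)^(H-3/2)) x⁻³ (∫₀ˣ ℋ_n(y) dy) dx`. -/
def gCoeff (H t : ℝ) (n : ℕ) : ℝ :=
  ∫ x in (0 : ℝ)..1,
    ((t + x⁻¹) ^ (H - 3/2) - (x⁻¹) ^ (H - 3/2)) * (x⁻¹) ^ (3 : ℕ) *
      (∫ y in (0 : ℝ)..x, haarFun n y)

/-- `C_H = 1/Γ(H + 1/2)`. -/
def CH (H : ℝ) : ℝ := 1 / Real.Gamma (H + 1/2)


/-!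
Write `l = k 2⁻ʲ` and `h = 2⁻ʲ⁻¹`. Since `ℋ_{2ʲ+k} = 2^{j/2}` on `[l, l+h)` and `-2^{j/2}` on
`[l+h, l+2h]`, the coefficient is `2^{j/2} ∫ₗ^{l+h} (φ_t(s) - φ_t(s+h)) ds`. For `k ≥ 1` the mean
value theorem bounds the integrand by `|H - 1/2| h (t+s)^{H-3/2}` with `t + s ≥ (k+1) h`; for
`k = 0` it is bounded by `h^{H-1/2} + s^{H-1/2}` (subadditivity of `x ↦ x^p` for `p ≥ 0`,
monotonicity for `p < 0`). Both give `|⟨φ_t, ℋ_{2ʲ+k}⟩| ≤ 3 · 2^{-jH} (k+1)^{H-3/2}`, and summing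
the squares over `k` gives the claim with `D = 9`.
-/

open Set intervalIntegral

lemma haarFun_two_pow_add {j k : ℕ} (hk : k < 2 ^ j) (s : ℝ) :
    haarFun (2 ^ j + k) s = (2 : ℝ) ^ ((j : ℝ) / 2) * haarMother (2 ^ j * s - k) := by
  have hlog : Nat.log2 (2 ^ j + k) = j := by
    rw [Nat.log2_eq_log_two]
    exact Nat.log_eq_of_pow_le_of_lt_pow (Nat.le_add_right _ _) (by rw [pow_succ]; omega)
  simp [haarFun, hlog]

lemma haarMother_mul_sub {q a l h : ℝ} (hq : 0 < q) (hl : q * l = a) (hh : 2 * q * h = 1)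
    (s : ℝ) :
    haarMother (q * s - a) =
      (Ico l (l + h)).indicator 1 s - (Icc (l + h) (l + 2 * h)).indicator 1 s := by
  have hlt : ∀ x y, q * x < q * y ↔ x < y := fun _ _ => mul_lt_mul_iff_right₀ hq
  have hle : ∀ x y, q * x ≤ q * y ↔ x ≤ y := fun _ _ => mul_le_mul_iff_right₀ hq
  have hIco : q * s - a ∈ Ico (0 : ℝ) (1 / 2) ↔ s ∈ Ico l (l + h) := by
    rw [mem_Ico, mem_Ico, ← hle l s, ← hlt s (l + h)]
    constructor <;> rintro ⟨h1, h2⟩ <;> constructor <;> linarith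
  have hIcc : q * s - a ∈ Icc (1 / 2 : ℝ) 1 ↔ s ∈ Icc (l + h) (l + 2 * h) := by
    rw [mem_Icc, mem_Icc, ← hle (l + h) s, ← hle s (l + 2 * h)]
    constructor <;> rintro ⟨h1, h2⟩ <;> constructor <;> linarith
  have hdisj : s ∈ Ico l (l + h) → s ∉ Icc (l + h) (l + 2 * h) :=
    fun h1 h2 => (h1.2.trans_le h2.1).false
  simp only [haarMother, hIco, hIcc]
  by_cases h1 : s ∈ Ico l (l + h)
  · simp [h1, hdisj h1]
  · by_cases h2 : s ∈ Icc (l + h) (l + 2 * h) <;> simp [h1, h2]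

lemma integral_indicator_Ioc {f : ℝ → ℝ} {a b c d : ℝ} (hac : a ≤ c) (hcd : c ≤ d)
    (hdb : d ≤ b) : ∫ x in a..b, (Ioc c d).indicator f x = ∫ x in c..d, f x := by
  rw [integral_of_le (hac.trans (hcd.trans hdb)), integral_of_le hcd,
    MeasureTheory.integral_indicator measurableSet_Ioc,
    Measure.restrict_restrict measurableSet_Ioc,
    inter_eq_left.mpr (Ioc_subset_Ioc hac hdb)]

lemma innerUnit_haarFun_two_pow_add {f : ℝ → ℝ} (hf : IntervalIntegrable f volume 0 1)
    {j k : ℕ} (hk : k < 2 ^ j) :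
    innerUnit f (haarFun (2 ^ j + k)) = (2 : ℝ) ^ ((j : ℝ) / 2) *
      ∫ s in k / 2 ^ j..k / 2 ^ j + (2 * 2 ^ j)⁻¹, (f s - f (s + (2 * 2 ^ j)⁻¹)) := by
  set q : ℝ := 2 ^ j
  set l : ℝ := k / q
  set h : ℝ := (2 * q)⁻¹
  have hq : 0 < q := by positivity
  have hh : 0 < h := by positivity
  have hl : 0 ≤ l := by positivity
  have hl2h : l + 2 * h ≤ 1 := by
    have hk' : k + 1 ≤ 2 ^ j := hk
    have hkq : (k : ℝ) + 1 ≤ q := by simp only [q]; exact_mod_cast hk'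
    calc l + 2 * h = (k + 1) / q := by simp only [l, h]; field_simp
      _ ≤ 1 := (div_le_one hq).2 hkq
  have hint : ∀ c d, 0 ≤ c → c ≤ d → d ≤ 1 → IntervalIntegrable f volume c d :=
    fun c d h0 hcd h1 => hf.mono_set (by
      rw [uIcc_of_le hcd, uIcc_of_le zero_le_one]; exact Icc_subset_Icc h0 h1)
  have hmul : ∀ s, f s * haarFun (2 ^ j + k) s = (2 : ℝ) ^ ((j : ℝ) / 2) *
      ((Ico l (l + h)).indicator f s - (Icc (l + h) (l + 2 * h)).indicator f s) := by
    intro s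
    rw [haarFun_two_pow_add hk, haarMother_mul_sub (h := h) hq (mul_div_cancel₀ _ hq.ne')
      (by simp only [h]; field_simp)]
    simp only [indicator_apply, Pi.one_apply]
    split_ifs <;> ring
  have hae : (fun s => f s * haarFun (2 ^ j + k) s) =ᵐ[volume]
      fun s => (2 : ℝ) ^ ((j : ℝ) / 2) *
        ((Ioc l (l + h)).indicator f s - (Ioc (l + h) (l + 2 * h)).indicator f s) := by
    filter_upwards [indicator_ae_eq_of_ae_eq_set (f := f) (Ico_ae_eq_Ioc (a := l) (b := l + h)),
      indicator_ae_eq_of_ae_eq_set (f := f) (Ioc_ae_eq_Icc (a := l + h) (b := l + 2 * h))]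
      with s h1 h2
    rw [hmul, h1, h2]
  have hind : ∀ c d, IntervalIntegrable ((Ioc c d).indicator f) volume 0 1 :=
    fun c d => ⟨hf.1.indicator measurableSet_Ioc, hf.2.indicator measurableSet_Ioc⟩
  have hshift : ∫ s in l..l + h, f (s + h) = ∫ s in l + h..l + 2 * h, f s := by
    rw [integral_comp_add_right, two_mul, add_assoc]
  rw [innerUnit, integral_congr_ae (hae.mono fun _ h _ => h), intervalIntegral.integral_const_mul,
    integral_sub (hind _ _) (hind _ _), integral_indicator_Ioc hl (by linarith) (by linarith),
    integral_indicator_Ioc (by linarith) (by linarith) hl2h, ← hshift,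
    intervalIntegral.integral_sub]
  · exact hint _ _ hl (by linarith) (by linarith)
  · exact (IntervalIntegrable.comp_add_right_iff (by simp)).2
      (hint _ _ (by linarith) (by linarith) (by linarith))

lemma abs_rpow_add_sub_rpow_le_mul {x h p : ℝ} (hx : 0 < x) (hh : 0 ≤ h) (hp : p ≤ 1) :
    |(x + h) ^ p - x ^ p| ≤ |p| * x ^ (p - 1) * h := by
  have hderiv : ∀ y ∈ Icc x (x + h),
      HasDerivWithinAt (fun y => y ^ p) (p * y ^ (p - 1)) (Icc x (x + h)) y :=
    fun y hy => (hasDerivAt_rpow_const (Or.inl (hx.trans_le hy.1).ne')).hasDerivWithinAt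
  have hbound : ∀ y ∈ Ico x (x + h), ‖p * y ^ (p - 1)‖ ≤ |p| * x ^ (p - 1) := by
    intro y hy
    rw [norm_mul, Real.norm_eq_abs, Real.norm_eq_abs,
      abs_of_nonneg (rpow_nonneg (hx.le.trans hy.1) _)]
    exact mul_le_mul_of_nonneg_left (rpow_le_rpow_of_nonpos hx hy.1 (by linarith)) (abs_nonneg p)
  simpa using norm_image_sub_le_of_norm_deriv_le_segment' hderiv hbound (x + h)
    (right_mem_Icc.2 (by linarith))

lemma abs_rpow_add_sub_rpow_le_add {s x h p : ℝ} (hs : 0 < s) (hsx : s ≤ x) (hh : 0 ≤ h)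
    (hp : p ≤ 1) : |(x + h) ^ p - x ^ p| ≤ h ^ p + s ^ p := by
  have hx : 0 < x := hs.trans_le hsx
  rcases le_or_gt 0 p with hp0 | hp0
  · have hmono : x ^ p ≤ (x + h) ^ p := rpow_le_rpow hx.le (by linarith) hp0
    have hsub := Real.rpow_add_le_add_rpow hx.le hh hp0 hp
    rw [abs_of_nonneg (sub_nonneg.2 hmono)]
    linarith [rpow_nonneg hs.le p]
  · have hanti : (x + h) ^ p ≤ x ^ p := rpow_le_rpow_of_nonpos hx (by linarith) hp0.le
    have hxs : x ^ p ≤ s ^ p := rpow_le_rpow_of_nonpos hs hsx hp0.le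
    rw [abs_of_nonpos (sub_nonpos.2 hanti)]
    linarith [rpow_nonneg hh p, rpow_nonneg (hx.le.trans (le_add_of_nonneg_right hh)) p]

lemma abs_integral_rpow_sub_shift_le_of_pos {t l h p : ℝ} (ht : 0 ≤ t) (hl : 0 < l)
    (hh : 0 ≤ h) (hp : p ≤ 1) :
    |∫ s in l..l + h, ((t + s) ^ p - (t + (s + h)) ^ p)| ≤ |p| * l ^ (p - 1) * h ^ 2 := by
  have hpointwise : ∀ s ∈ uIoc l (l + h),
      ‖(t + s) ^ p - (t + (s + h)) ^ p‖ ≤ |p| * l ^ (p - 1) * h := by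
    intro s hs
    rw [uIoc_of_le (by linarith)] at hs
    have hls : l ≤ t + s := by linarith [hs.1]
    rw [Real.norm_eq_abs, abs_sub_comm, ← add_assoc]
    calc _ ≤ |p| * (t + s) ^ (p - 1) * h := abs_rpow_add_sub_rpow_le_mul (hl.trans_le hls) hh hp
      _ ≤ |p| * l ^ (p - 1) * h := by
        have := rpow_le_rpow_of_nonpos hl hls (by linarith : p - 1 ≤ 0)
        gcongr
  have := norm_integral_le_of_norm_le_const hpointwise
  rwa [Real.norm_eq_abs, add_sub_cancel_left, abs_of_nonneg hh, mul_assoc, ← sq] at this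

lemma abs_integral_zero_rpow_sub_shift_le {t h p : ℝ} (ht : 0 ≤ t) (hh : 0 ≤ h)
    (hp1 : -1 < p) (hp : p ≤ 1) :
    |∫ s in 0..h, ((t + s) ^ p - (t + (s + h)) ^ p)| ≤ (1 + (p + 1)⁻¹) * h ^ (p + 1) := by
  have hpointwise :
      ∀ᵐ s, s ∈ Ioc 0 h → ‖(t + s) ^ p - (t + (s + h)) ^ p‖ ≤ h ^ p + s ^ p := by
    refine Eventually.of_forall fun s hs => ?_
    rw [Real.norm_eq_abs, abs_sub_comm, ← add_assoc]
    exact abs_rpow_add_sub_rpow_le_add hs.1 (by linarith) hh hp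
  have hint : IntervalIntegrable (fun s => h ^ p + s ^ p) volume 0 h :=
    intervalIntegrable_const.add (intervalIntegrable_rpow' hp1)
  have hval : ∫ s in 0..h, (h ^ p + s ^ p) = (1 + (p + 1)⁻¹) * h ^ (p + 1) := by
    rw [intervalIntegral.integral_add intervalIntegrable_const (intervalIntegrable_rpow' hp1),
      intervalIntegral.integral_const, integral_rpow (Or.inl hp1), zero_rpow (by linarith),
      rpow_add_one' hh (by linarith)]
    simp only [sub_zero, smul_eq_mul]
    ring
  simpa [hval] using norm_integral_le_of_norm_le hh hpointwise hint

lemma two_rpow_half_mul_inv_two_pow_rpow_le (j : ℕ) {H : ℝ} (hH : 0 ≤ H) :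
    (2 : ℝ) ^ ((j : ℝ) / 2) * ((2 * 2 ^ j)⁻¹ : ℝ) ^ (H + 1 / 2) ≤ 2 ^ (-(j * H)) := by
  have hinv : ((2 * 2 ^ j)⁻¹ : ℝ) = 2 ^ (-((j : ℝ) + 1)) := by
    rw [rpow_neg zero_le_two, rpow_add_one two_ne_zero, rpow_natCast, mul_comm]
  rw [hinv, ← rpow_mul zero_le_two, ← rpow_add two_pos]
  exact rpow_le_rpow_of_exponent_le one_le_two (by nlinarith)

lemma abs_innerUnit_rpow_haarFun_le {H t : ℝ} (hH : H ∈ Ioo 0 1) (ht : 0 < t) {j k : ℕ}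
    (hk : k < 2 ^ j) :
    |innerUnit (fun s => (t + s) ^ (H - 1 / 2)) (haarFun (2 ^ j + k))|
      ≤ 3 * 2 ^ (-(j * H)) * ((k : ℝ) + 1) ^ (H - 3 / 2) := by
  obtain ⟨hH0, hH1⟩ := hH
  have hf : IntervalIntegrable (fun s => (t + s) ^ (H - 1 / 2)) volume 0 1 := by
    refine (ContinuousOn.rpow_const (by fun_prop) fun s hs => Or.inl ?_).intervalIntegrable
    rw [uIcc_of_le zero_le_one] at hs
    linarith [hs.1]
  set c : ℝ := 2 ^ ((j : ℝ) / 2)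
  set h : ℝ := (2 * 2 ^ j)⁻¹
  have hh : 0 < h := by positivity
  have hscale : c * h ^ (H + 1 / 2) ≤ 2 ^ (-(j * H)) :=
    two_rpow_half_mul_inv_two_pow_rpow_le j hH0.le
  have hexp : H - 1 / 2 + 1 = H + 1 / 2 := by ring
  rw [innerUnit_haarFun_two_pow_add hf hk, abs_mul, abs_of_pos (by positivity)]
  rcases Nat.eq_zero_or_pos k with rfl | hk0
  · have hI := abs_integral_zero_rpow_sub_shift_le ht.le hh.le
      (p := H - 1 / 2) (by linarith) (by linarith)
    have hconst : 1 + (H - 1 / 2 + 1)⁻¹ ≤ 3 := by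
      rw [hexp]
      have : (H + 1 / 2)⁻¹ ≤ 2 := by rw [inv_le_comm₀ (by linarith) two_pos]; linarith
      linarith
    simp only [CharP.cast_eq_zero, zero_div, zero_add, one_rpow, mul_one]
    calc c * |∫ s in 0..h, ((t + s) ^ (H - 1 / 2) - (t + (s + h)) ^ (H - 1 / 2))|
        ≤ c * ((1 + (H - 1 / 2 + 1)⁻¹) * h ^ (H - 1 / 2 + 1)) := by gcongr
      _ ≤ c * (3 * h ^ (H + 1 / 2)) := by rw [← hexp]; gcongr
      _ ≤ 3 * 2 ^ (-(j * H)) := by linarith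
  · set l : ℝ := k / 2 ^ j
    have hk1 : (1 : ℝ) ≤ k := by exact_mod_cast hk0
    have hm : 0 < ((k : ℝ) + 1) * h := by positivity
    have hml : ((k : ℝ) + 1) * h ≤ l := by
      simp only [l, h]
      rw [← div_eq_mul_inv, div_le_div_iff₀ (by positivity) (by positivity)]
      nlinarith [pow_pos (two_pos : (0 : ℝ) < 2) j]
    have hI := abs_integral_rpow_sub_shift_le_of_pos ht.le (hm.trans_le hml) hh.le
      (p := H - 1 / 2) (by linarith)
    have hp : |H - 1 / 2| ≤ 1 / 2 := abs_le.2 ⟨by linarith, by linarith⟩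
    have hlm : l ^ (H - 1 / 2 - 1) ≤ (((k : ℝ) + 1) * h) ^ (H - 1 / 2 - 1) :=
      rpow_le_rpow_of_nonpos hm hml (by linarith)
    have hsplit : (((k : ℝ) + 1) * h) ^ (H - 1 / 2 - 1) * h ^ 2
        = ((k : ℝ) + 1) ^ (H - 3 / 2) * h ^ (H + 1 / 2) := by
      rw [mul_rpow (by positivity) hh.le, mul_assoc, ← rpow_natCast h 2, ← rpow_add hh]
      congr 2 <;> push_cast <;> ring
    calc c * |∫ s in l..l + h, ((t + s) ^ (H - 1 / 2) - (t + (s + h)) ^ (H - 1 / 2))|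
        ≤ c * (|H - 1 / 2| * l ^ (H - 1 / 2 - 1) * h ^ 2) := by gcongr
      _ ≤ c * (1 / 2 * (((k : ℝ) + 1) * h) ^ (H - 1 / 2 - 1) * h ^ 2) := by gcongr
      _ = 1 / 2 * ((k : ℝ) + 1) ^ (H - 3 / 2) * (c * h ^ (H + 1 / 2)) := by
        rw [mul_assoc (1 / 2), hsplit]
        ring
      _ ≤ 1 / 2 * ((k : ℝ) + 1) ^ (H - 3 / 2) * 2 ^ (-(j * H)) := by gcongr
      _ ≤ 3 * 2 ^ (-(j * H)) * ((k : ℝ) + 1) ^ (H - 3 / 2) := by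
        have : 0 ≤ ((k : ℝ) + 1) ^ (H - 3 / 2) * (2 : ℝ) ^ (-(j * H)) := by positivity
        linarith

lemma summable_nat_add_one_rpow {a : ℝ} (ha : a < -1) :
    Summable fun ℓ : ℕ => ((ℓ : ℝ) + 1) ^ a := by
  have := (summable_nat_add_iff 1).2 (Real.summable_nat_rpow.2 ha)
  simpa only [Nat.cast_add, Nat.cast_one] using this

lemma sq_rpow_eq_rpow_two_mul {x : ℝ} (hx : 0 ≤ x) (a : ℝ) : (x ^ a) ^ 2 = x ^ (2 * a) := by
  rw [← rpow_mul_natCast hx, Nat.cast_two, mul_comm]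

/-- level-`j` bound for the squared Haar coefficients of
`φ_t(s) = (t+s)^(H-1/2)`. -/
theorem stmt14 :
    ∃ D : ℝ, 0 < D ∧
      ∀ H : ℝ, H ∈ Set.Ioo (0 : ℝ) 1 →
      ∀ t : ℝ, t ∈ Set.Ioc (0 : ℝ) 1 →
      ∀ j : ℕ,
        (∑ k ∈ Finset.range (2 ^ j),
            (innerUnit (fun s => (t + s) ^ (H - 1/2)) (haarFun (2 ^ j + k))) ^ 2)
          ≤ D * (2 : ℝ) ^ (-(2 * (j : ℝ) * H)) * ∑' ℓ : ℕ, ((ℓ : ℝ) + 1) ^ (2 * H - 3) := by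
  refine ⟨9, by norm_num, fun H hH t ht j => ?_⟩
  have hsum := summable_nat_add_one_rpow (a := 2 * H - 3) (by linarith [hH.2])
  calc (∑ k ∈ Finset.range (2 ^ j),
          (innerUnit (fun s => (t + s) ^ (H - 1/2)) (haarFun (2 ^ j + k))) ^ 2)
      ≤ ∑ k ∈ Finset.range (2 ^ j),
          (3 * 2 ^ (-(j * H)) * ((k : ℝ) + 1) ^ (H - 3 / 2)) ^ 2 := by
        refine Finset.sum_le_sum fun k hk => ?_
        rw [← sq_abs]
        exact pow_le_pow_left₀ (abs_nonneg _)
          (abs_innerUnit_rpow_haarFun_le hH ht.1 (Finset.mem_range.1 hk)) 2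
    _ = 9 * (2 : ℝ) ^ (-(2 * (j : ℝ) * H)) *
          ∑ k ∈ Finset.range (2 ^ j), ((k : ℝ) + 1) ^ (2 * H - 3) := by
        rw [Finset.mul_sum]
        refine Finset.sum_congr rfl fun k _ => ?_
        rw [mul_pow, mul_pow, sq_rpow_eq_rpow_two_mul zero_le_two,
          sq_rpow_eq_rpow_two_mul (by positivity)]
        ring_nf
    _ ≤ 9 * (2 : ℝ) ^ (-(2 * (j : ℝ) * H)) *
          ∑' ℓ : ℕ, ((ℓ : ℝ) + 1) ^ (2 * H - 3) := by
        gcongr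
        exact hsum.sum_le_tsum _ fun ℓ _ => by positivity
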